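/- Let X be a measurable space, let μ be a finite measure on X, let f : X → ℝ be a measurable function, and let a < b be real numbers. Then ∫_{(a,b)} [ liminf_{h → 0⁺} (1/h) · μ({x : t < f(x) < t + h}) ] dt ≤ μ({x : a < f(x) < b}), where the integral on the left is the Lebesgue integral (with values in [0, ∞]) of the nonnegative function of t given by the lower limit as h → 0⁺ of (1/h) μ({t < f < t + h}). -/

import Mathlib

open MeasureTheory Filter Set
open scoped ENNReal

/-- Coarea-type estimate: for a finite measure μ and measurable f,
∫_{(a,b)} liminf_{h→0⁺} (1/h) μ({t < f < t+h}) dt ≤ μ({a < f < b}). -/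
theorem stmt_8 {X : Type*} [MeasurableSpace X] (μ : Measure X)
    [IsFiniteMeasure μ] (f : X → ℝ) (hf : Measurable f) (a b : ℝ) (hab : a < b) :
    ∫⁻ t in Set.Ioo a b,
        Filter.liminf (fun h : ℝ => μ {x | t < f x ∧ f x < t + h} / ENNReal.ofReal h)
          (nhdsWithin 0 (Set.Ioi 0)) ≤
      μ {x | a < f x ∧ f x < b} := by
  set E : Set X := {x | a < f x ∧ f x < b} with hEdef
  have hEmeas : MeasurableSet E :=
    (measurableSet_lt measurable_const hf).inter (measurableSet_lt hf measurable_const)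
  set g : ℝ → ℝ≥0∞ := fun t =>
    Filter.liminf (fun h : ℝ => μ {x | t < f x ∧ f x < t + h} / ENNReal.ofReal h)
      (nhdsWithin 0 (Set.Ioi 0)) with hgdef
  have hms : ∀ r : ℝ, MeasurableSet {p : ℝ × X | p.1 < f p.2 ∧ f p.2 < p.1 + r} := fun r =>
    (measurableSet_lt measurable_fst (hf.comp measurable_snd)).inter
      (measurableSet_lt (hf.comp measurable_snd) (measurable_fst.add_const r))
  have hslice : ∀ r : ℝ, Measurable fun t : ℝ => μ {x | t < f x ∧ f x < t + r} := fun r =>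
    measurable_measure_prodMk_left (hms r)
  -- Key estimate on subintervals staying away from b
  have key : ∀ c : ℝ, c < b → ∫⁻ t in Set.Ioo a c, g t ≤ μ E := by
    intro c hcb
    have hbc : 0 < b - c := sub_pos.2 hcb
    set hn : ℕ → ℝ := fun n => (b - c) / (n + 1) with hhn
    have hpos : ∀ n, 0 < hn n := fun n => div_pos hbc (by positivity)
    have hle : ∀ n : ℕ, hn n ≤ b - c := fun n =>
      div_le_self hbc.le (le_add_of_nonneg_left (Nat.cast_nonneg n))
    have htends : Tendsto hn atTop (nhdsWithin 0 (Set.Ioi 0)) := by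
      apply tendsto_nhdsWithin_of_tendsto_nhds_of_eventually_within
      · have h1 : Tendsto (fun n : ℕ => (b - c) * (1 / ((n : ℝ) + 1))) atTop (nhds ((b - c) * 0)) :=
          tendsto_one_div_add_atTop_nhds_zero_nat.const_mul (b - c)
        have h2 : (fun n : ℕ => (b - c) * (1 / ((n : ℝ) + 1))) = hn := by
          funext n; rw [hhn]; ring
        rw [h2, mul_zero] at h1
        exact h1
      · exact Eventually.of_forall fun n => hpos n
    set gseq : ℕ → ℝ → ℝ≥0∞ := fun n t =>
      μ {x | t < f x ∧ f x < t + hn n} / ENNReal.ofReal (hn n) with hgseq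
    have hgseqmeas : ∀ n, Measurable (gseq n) := fun n => (hslice (hn n)).div_const _
    -- pointwise: liminf over the filter ≤ liminf along the sequence
    have hpt : ∀ t, g t ≤ liminf (fun n => gseq n t) atTop := by
      intro t
      have h1 : g t ≤ liminf (fun h : ℝ => μ {x | t < f x ∧ f x < t + h} / ENNReal.ofReal h)
          (map hn atTop) := liminf_le_liminf_of_le htends
      rwa [← Filter.liminf_comp] at h1
    -- Tonelli-type bound for each n
    have core : ∀ n : ℕ, ∫⁻ t in Set.Ioo a c, μ {x | t < f x ∧ f x < t + hn n}
        ≤ ENNReal.ofReal (hn n) * μ E := by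
      intro n
      set r : ℝ := hn n with hrdef
      have hr : 0 < r := hpos n
      have hrle : r ≤ b - c := hle n
      have huncurry : Measurable (Function.uncurry fun (t : ℝ) (x : X) =>
          Set.indicator {x' | t < f x' ∧ f x' < t + r} (fun _ => (1 : ℝ≥0∞)) x) := by
        have heq : (Function.uncurry fun (t : ℝ) (x : X) =>
            Set.indicator {x' | t < f x' ∧ f x' < t + r} (fun _ => (1 : ℝ≥0∞)) x)
            = Set.indicator {p : ℝ × X | p.1 < f p.2 ∧ f p.2 < p.1 + r} (fun _ => 1) := by
          funext p
          rcases p with ⟨t, x⟩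
          simp [Function.uncurry, Set.indicator_apply]
        rw [heq]
        exact measurable_const.indicator (hms r)
      calc ∫⁻ t in Set.Ioo a c, μ {x | t < f x ∧ f x < t + r}
          = ∫⁻ t in Set.Ioo a c, ∫⁻ x, Set.indicator {x' | t < f x' ∧ f x' < t + r}
              (fun _ => (1 : ℝ≥0∞)) x ∂μ := by
            refine lintegral_congr fun t => ?_
            have hms' : MeasurableSet {x : X | t < f x ∧ f x < t + r} :=
              (measurableSet_lt measurable_const hf).inter (measurableSet_lt hf measurable_const)
            exact ((lintegral_indicator_const hms' 1).trans (one_mul _)).symm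
        _ = ∫⁻ x, ∫⁻ t in Set.Ioo a c, Set.indicator {x' | t < f x' ∧ f x' < t + r}
              (fun _ => (1 : ℝ≥0∞)) x ∂volume ∂μ :=
            lintegral_lintegral_swap huncurry.aemeasurable
        _ ≤ ∫⁻ x, Set.indicator E (fun _ => ENNReal.ofReal r) x ∂μ := by
            refine lintegral_mono fun x => ?_
            have hiff : ∀ t : ℝ, (t < f x ∧ f x < t + r) ↔ t ∈ Set.Ioo (f x - r) (f x) := by
              intro t
              simp only [Set.mem_Ioo]
              constructor <;> rintro ⟨h1, h2⟩ <;> constructor <;> linarith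
            have heq2 : (fun t : ℝ => Set.indicator {x' | t < f x' ∧ f x' < t + r}
                (fun _ => (1 : ℝ≥0∞)) x)
                = Set.indicator (Set.Ioo (f x - r) (f x)) (fun _ => (1 : ℝ≥0∞)) := by
              funext t
              simp only [Set.indicator_apply, Set.mem_setOf_eq, hiff t]
            rw [heq2, lintegral_indicator_const measurableSet_Ioo, one_mul,
              Measure.restrict_apply measurableSet_Ioo]
            by_cases hx : x ∈ E
            · rw [Set.indicator_of_mem hx]
              calc volume (Set.Ioo (f x - r) (f x) ∩ Set.Ioo a c)
                  ≤ volume (Set.Ioo (f x - r) (f x)) := measure_mono Set.inter_subset_left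
                _ = ENNReal.ofReal r := by rw [Real.volume_Ioo]; congr 1; ring
            · have hempty : Set.Ioo (f x - r) (f x) ∩ Set.Ioo a c = ∅ := by
                rw [Set.eq_empty_iff_forall_notMem]
                rintro t ⟨⟨h1, h2⟩, h3, h4⟩
                exact absurd (⟨by linarith, by linarith⟩ : a < f x ∧ f x < b) hx
              rw [hempty, measure_empty]
              exact zero_le
        _ = ENNReal.ofReal r * μ E := lintegral_indicator_const hEmeas _
    have hbound : ∀ n : ℕ, ∫⁻ t in Set.Ioo a c, gseq n t ≤ μ E := by
      intro n
      have hC0 : ENNReal.ofReal (hn n) ≠ 0 := by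
        simp only [ne_eq, ENNReal.ofReal_eq_zero, not_le]
        exact hpos n
      have hCtop : ENNReal.ofReal (hn n) ≠ ⊤ := ENNReal.ofReal_ne_top
      have h1 : ∫⁻ t in Set.Ioo a c, gseq n t
          = (ENNReal.ofReal (hn n))⁻¹ * ∫⁻ t in Set.Ioo a c, μ {x | t < f x ∧ f x < t + hn n} := by
        simp_rw [hgseq, ENNReal.div_eq_inv_mul]
        exact lintegral_const_mul' _ _ (ENNReal.inv_ne_top.2 hC0)
      rw [h1]
      calc (ENNReal.ofReal (hn n))⁻¹ * ∫⁻ t in Set.Ioo a c, μ {x | t < f x ∧ f x < t + hn n}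
          ≤ (ENNReal.ofReal (hn n))⁻¹ * (ENNReal.ofReal (hn n) * μ E) :=
            mul_le_mul_right (core n) _
        _ = μ E := by rw [← mul_assoc, ENNReal.inv_mul_cancel hC0 hCtop, one_mul]
    calc ∫⁻ t in Set.Ioo a c, g t
        ≤ ∫⁻ t in Set.Ioo a c, liminf (fun n => gseq n t) atTop := lintegral_mono hpt
      _ ≤ liminf (fun n => ∫⁻ t in Set.Ioo a c, gseq n t) atTop :=
          lintegral_liminf_le hgseqmeas
      _ ≤ μ E := liminf_le_of_frequently_le' (Frequently.of_forall hbound)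
  -- decompose (a,b) into countably many pieces staying away from b
  set c : ℕ → ℝ := fun k => b - (b - a) / (k + 1) with hcdef
  have hc0 : c 0 = a := by simp [hcdef]
  have hcb : ∀ k, c k < b := by
    intro k
    have h1 : 0 < (b - a) / ((k : ℝ) + 1) := div_pos (sub_pos.2 hab) (by positivity)
    show b - (b - a) / ((k : ℝ) + 1) < b
    linarith
  have hmono : Monotone c := by
    intro k l hkl
    have h1 : (b - a) / ((l : ℝ) + 1) ≤ (b - a) / ((k : ℝ) + 1) := by
      have hk : ((k : ℝ) + 1) ≤ ((l : ℝ) + 1) := by exact_mod_cast Nat.succ_le_succ hkl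
      gcongr
    show b - (b - a) / ((k : ℝ) + 1) ≤ b - (b - a) / ((l : ℝ) + 1)
    linarith
  have hex : ∀ t : ℝ, t < b → ∃ k, t < c k := by
    intro t ht
    have hbt : 0 < b - t := sub_pos.2 ht
    obtain ⟨k, hk⟩ := exists_nat_gt ((b - a) / (b - t))
    refine ⟨k, ?_⟩
    have h2 : (b - a) / (b - t) < (k : ℝ) + 1 := by linarith
    have h3 : (b - a) / ((k : ℝ) + 1) < b - t := by
      rw [div_lt_iff₀ (by positivity)]
      calc b - a = (b - a) / (b - t) * (b - t) := by field_simp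
        _ < ((k : ℝ) + 1) * (b - t) := mul_lt_mul_of_pos_right h2 hbt
        _ = (b - t) * ((k : ℝ) + 1) := mul_comm _ _
    show t < b - (b - a) / ((k : ℝ) + 1)
    linarith
  set S : ℕ → Set ℝ := fun k => Set.Ioo a b ∩ Set.Ico (c k) (c (k + 1)) with hSdef
  have hSmeas : ∀ k, MeasurableSet (S k) := fun k => measurableSet_Ioo.inter measurableSet_Ico
  have hdisj : Pairwise (Function.onFun Disjoint S) := by
    have haux : ∀ i j : ℕ, i < j → Disjoint (S i) (S j) := by
      intro i j hij
      rw [Set.disjoint_left]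
      rintro t ⟨-, -, h2⟩ ⟨-, h3, -⟩
      have h4 : c (i + 1) ≤ c j := hmono (Nat.succ_le_of_lt hij)
      linarith
    intro i j hij
    rcases hij.lt_or_gt with h | h
    · exact haux i j h
    · exact (haux j i h).symm
  have hunion : (⋃ k, S k) = Set.Ioo a b := by
    ext t
    simp only [Set.mem_iUnion, hSdef, Set.mem_inter_iff, Set.mem_Ioo, Set.mem_Ico]
    constructor
    · rintro ⟨k, ht, -⟩; exact ht
    · intro ht
      have hex' : ∃ k, t < c k := hex t ht.2
      have hk0 : t < c (Nat.find hex') := Nat.find_spec hex'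
      have hne : Nat.find hex' ≠ 0 := by
        intro h
        rw [h, hc0] at hk0
        exact absurd ht.1 (not_lt.2 hk0.le)
      obtain ⟨m, hm⟩ := Nat.exists_eq_succ_of_ne_zero hne
      have hmlt : ¬ t < c m := Nat.find_min hex' (by omega)
      rw [hm] at hk0
      exact ⟨m, ht, not_lt.1 hmlt, hk0⟩
  have hsub : ∀ N : ℕ, (⋃ k ∈ Finset.range N, S k) ⊆ Set.Ioo a (c N) := by
    intro N t ht
    simp only [Set.mem_iUnion, Finset.mem_range, exists_prop] at ht
    obtain ⟨k, hkN, htk⟩ := ht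
    exact ⟨htk.1.1, lt_of_lt_of_le htk.2.2 (hmono (Nat.succ_le_of_lt hkN))⟩
  calc ∫⁻ t in Set.Ioo a b, g t
      = ∑' k, ∫⁻ t in S k, g t := by
        rw [← hunion]
        exact lintegral_iUnion hSmeas hdisj _
    _ = ⨆ N, ∑ k ∈ Finset.range N, ∫⁻ t in S k, g t := ENNReal.tsum_eq_iSup_nat
    _ ≤ μ E := by
        refine iSup_le fun N => ?_
        have h1 : ∑ k ∈ Finset.range N, ∫⁻ t in S k, g t
            = ∫⁻ t in ⋃ k ∈ Finset.range N, S k, g t :=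
          (lintegral_biUnion_finset (fun i _ j _ hij => hdisj hij) (fun k _ => hSmeas k) _).symm
        rw [h1]
        exact le_trans (lintegral_mono_set (hsub N)) (key (c N) (hcb N))
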